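/- Subsequence argument for Cesàro averages: Let (x_k) be a sequence of nonnegative real numbers and for t ≥ 1 define A_t = (1/t) ∑_{k=0}^{⌊t⌋-1} x_k. Suppose (ρ_j) ⊂ (1,∞) is a sequence with ρ_j → 1 such that {ρ_j^m : m ∈ ℕ} ⊆ {ρ_ℓ^m : m ∈ ℕ} whenever j ≤ ℓ, and for every j the sequence (A_{ρ_j^m})_{m≥1} converges to some limit y_j as m → ∞. Then all the limits y_j coincide, and the full sequence (A_n)_{n≥1} (over natural numbers n) converges to this common limit. -/

import Mathlib

/-- The Cesàro average `A_t = (1/t) ∑_{k=0}^{⌊t⌋-1} x_k` for real `t`. -/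
noncomputable def cesaroAvg (x : ℕ → ℝ) (t : ℝ) : ℝ :=
  (1 / t) * ∑ k ∈ Finset.range ⌊t⌋₊, x k

lemma cesaroAvg_nonneg (x : ℕ → ℝ) (hx : ∀ k, 0 ≤ x k) {t : ℝ} (ht : 0 ≤ t) :
    0 ≤ cesaroAvg x t :=
  mul_nonneg (by positivity) (Finset.sum_nonneg fun i _ => hx i)

lemma cesaroAvg_mul (x : ℕ → ℝ) {t : ℝ} (ht : t ≠ 0) :
    cesaroAvg x t * t = ∑ k ∈ Finset.range ⌊t⌋₊, x k := by
  unfold cesaroAvg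
  field_simp

lemma sum_floor_mono (x : ℕ → ℝ) (hx : ∀ k, 0 ≤ x k) {s t : ℝ} (h : s ≤ t) :
    ∑ k ∈ Finset.range ⌊s⌋₊, x k ≤ ∑ k ∈ Finset.range ⌊t⌋₊, x k :=
  Finset.sum_le_sum_of_subset_of_nonneg
    (Finset.range_subset_range.mpr (Nat.floor_le_floor h)) (fun i _ _ => hx i)

theorem stmt2 (x : ℕ → ℝ) (hx : ∀ k, 0 ≤ x k)
    (ρ : ℕ → ℝ) (hρ : ∀ j, 1 < ρ j)
    (hρlim : Filter.Tendsto ρ Filter.atTop (nhds 1))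
    (hnest : ∀ j ℓ : ℕ, j ≤ ℓ → ∀ m : ℕ, 1 ≤ m → ∃ m' : ℕ, 1 ≤ m' ∧ ρ j ^ m = ρ ℓ ^ m')
    (y : ℕ → ℝ)
    (hconv : ∀ j : ℕ, Filter.Tendsto (fun m : ℕ => cesaroAvg x (ρ j ^ m))
      Filter.atTop (nhds (y j))) :
    (∀ j ℓ : ℕ, y j = y ℓ) ∧
      Filter.Tendsto (fun n : ℕ => cesaroAvg x (n : ℝ)) Filter.atTop (nhds (y 0)) := by
  have key : ∀ j ℓ : ℕ, j ≤ ℓ → y j = y ℓ := by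
    intro j ℓ hjl
    choose φ hφ1 hφ2 using hnest j ℓ hjl
    set ψ : ℕ → ℕ := fun m => φ (m + 1) (Nat.le_add_left 1 m) with hψdef
    have hψeq : ∀ m : ℕ, ρ j ^ (m + 1) = ρ ℓ ^ ψ m := fun m => hφ2 (m + 1) _
    have hψ : Filter.Tendsto ψ Filter.atTop Filter.atTop := by
      rw [Filter.tendsto_atTop]
      intro b
      have h1 : Filter.Tendsto (fun m : ℕ => ρ j ^ (m + 1)) Filter.atTop Filter.atTop :=
        (tendsto_pow_atTop_atTop_of_one_lt (hρ j)).comp (Filter.tendsto_add_atTop_nat 1)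
      filter_upwards [h1.eventually_ge_atTop (ρ ℓ ^ b)] with m hm
      have : ρ ℓ ^ b ≤ ρ ℓ ^ ψ m := by rw [← hψeq m]; exact hm
      exact (pow_le_pow_iff_right₀ (hρ ℓ)).mp this
    have h2 : Filter.Tendsto (fun m : ℕ => cesaroAvg x (ρ j ^ (m + 1)))
        Filter.atTop (nhds (y ℓ)) := by
      have := (hconv ℓ).comp hψ
      convert this using 2 with m
      rw [hψeq m]; rfl
    have h3 : Filter.Tendsto (fun m : ℕ => cesaroAvg x (ρ j ^ m))
        Filter.atTop (nhds (y ℓ)) :=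
      (Filter.tendsto_add_atTop_iff_nat 1).mp h2
    exact tendsto_nhds_unique (hconv j) h3
  have heq : ∀ j ℓ : ℕ, y j = y ℓ := by
    intro j ℓ
    rcases le_total j ℓ with h | h
    · exact key j ℓ h
    · exact (key ℓ j h).symm
  refine ⟨heq, ?_⟩
  set Y := y 0 with hY
  have hY0 : 0 ≤ Y := by
    refine le_of_tendsto_of_tendsto' tendsto_const_nhds (hconv 0) (fun m => ?_)
    exact cesaroAvg_nonneg x hx (le_of_lt (pow_pos (lt_trans one_pos (hρ 0)) m))
  rw [Metric.tendsto_atTop]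
  intro ε hε
  -- pick j with ρ j close to 1
  have hδ : (0:ℝ) < min 1 (ε / (4 * (Y + 1))) := by positivity
  obtain ⟨j, hj⟩ := (Metric.tendsto_atTop.mp hρlim (min 1 (ε / (4 * (Y + 1)))) hδ)
  have hjc := hj j le_rfl
  set r := ρ j with hr
  have hr1 : 1 < r := hρ j
  have hr0 : (0:ℝ) < r := lt_trans one_pos hr1
  have hrd : r - 1 < min 1 (ε / (4 * (Y + 1))) := by
    rw [Real.dist_eq] at hjc
    have := abs_lt.mp hjc
    linarith [this.1, this.2]
  have hr2 : r ≤ 2 := by have := lt_of_lt_of_le hrd (min_le_left _ _); linarith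
  have hrY : (r - 1) * Y ≤ ε / 4 := by
    have h1 : r - 1 < ε / (4 * (Y + 1)) := lt_of_lt_of_le hrd (min_le_right _ _)
    have h2 : (r - 1) * (Y + 1) ≤ ε / (4 * (Y + 1)) * (Y + 1) := by
      apply mul_le_mul_of_nonneg_right (le_of_lt h1); linarith
    have h3 : ε / (4 * (Y + 1)) * (Y + 1) = ε / 4 := by field_simp
    nlinarith
  -- convergence along powers of r
  have hconvj : Filter.Tendsto (fun m : ℕ => cesaroAvg x (r ^ m))
      Filter.atTop (nhds Y) := by rw [hY, heq 0 j]; exact hconv j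
  obtain ⟨M, hM⟩ := Metric.tendsto_atTop.mp hconvj (ε / 8) (by positivity)
  refine ⟨max 1 ⌈r ^ (M + 1)⌉₊, fun n hn => ?_⟩
  have hn1 : 1 ≤ n := le_trans (le_max_left _ _) hn
  have hnr : r ^ (M + 1) ≤ (n : ℝ) := by
    calc r ^ (M + 1) ≤ (⌈r ^ (M + 1)⌉₊ : ℝ) := Nat.le_ceil _
    _ ≤ (n : ℝ) := by exact_mod_cast le_trans (le_max_right _ _) hn
  -- find m with r^m ≤ n < r^(m+1)
  have hex : ∃ k : ℕ, (n : ℝ) < r ^ (k + 1) := by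
    obtain ⟨k, hk⟩ := pow_unbounded_of_one_lt (n : ℝ) hr1
    exact ⟨k, lt_of_lt_of_le hk (pow_le_pow_right₀ hr1.le (Nat.le_succ k))⟩
  set m := Nat.find hex with hm
  have hmu : (n : ℝ) < r ^ (m + 1) := Nat.find_spec hex
  have hmM : M + 1 ≤ m := by
    by_contra h
    push_neg at h
    have : r ^ (m + 1) ≤ r ^ (M + 1) := pow_le_pow_right₀ (le_of_lt hr1) (by omega)
    linarith
  have hml : r ^ m ≤ (n : ℝ) := by
    have hm1 : 1 ≤ m := by omega
    have := Nat.find_min hex (m := m - 1) (by omega)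
    push_neg at this
    have heq' : m - 1 + 1 = m := by omega
    rwa [heq'] at this
  clear_value m
  -- bounds
  set a := cesaroAvg x (r ^ m) with ha
  set b := cesaroAvg x (r ^ (m + 1)) with hb
  have ha0 : 0 ≤ a := cesaroAvg_nonneg x hx (le_of_lt (pow_pos hr0 m))
  have hb0 : 0 ≤ b := cesaroAvg_nonneg x hx (le_of_lt (pow_pos hr0 (m + 1)))
  have haY : |a - Y| < ε / 8 := by
    have := hM m (by omega); rwa [Real.dist_eq] at this
  have hbY : |b - Y| < ε / 8 := by
    have := hM (m + 1) (by omega); rwa [Real.dist_eq] at this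
  have hn0 : (0:ℝ) < (n : ℝ) := by exact_mod_cast hn1
  set A := cesaroAvg x (n : ℝ) with hA
  have hA0 : 0 ≤ A := cesaroAvg_nonneg x hx (le_of_lt hn0)
  have hSn : A * (n : ℝ) = ∑ k ∈ Finset.range n, x k := by
    rw [hA, cesaroAvg_mul x (ne_of_gt hn0), Nat.floor_natCast]
  have hlow : a * r ^ m ≤ A * (n : ℝ) := by
    rw [hSn, ha, cesaroAvg_mul x (ne_of_gt (pow_pos hr0 m))]
    simpa using sum_floor_mono x hx hml
  have hhigh : A * (n : ℝ) ≤ b * r ^ (m + 1) := by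
    rw [hSn, hb, cesaroAvg_mul x (ne_of_gt (pow_pos hr0 (m + 1)))]
    simpa using sum_floor_mono x hx (le_of_lt hmu)
  -- upper bound: A ≤ b * r
  have hub : A ≤ b * r := by
    have h2 : b * r ^ (m + 1) = (b * r) * r ^ m := by ring
    have h3 : (b * r) * r ^ m ≤ (b * r) * (n:ℝ) :=
      mul_le_mul_of_nonneg_left hml (by positivity)
    have h4 : A * (n:ℝ) ≤ (b * r) * (n:ℝ) := by linarith
    exact le_of_mul_le_mul_right h4 hn0
  -- lower bound: a ≤ A * r
  have hlb : a ≤ A * r := by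
    have h1 : a * (n:ℝ) ≤ a * r ^ (m+1) :=
      mul_le_mul_of_nonneg_left (le_of_lt hmu) ha0
    have h2 : a * r ^ (m+1) = (a * r ^ m) * r := by ring
    have h3 : (a * r ^ m) * r ≤ (A * (n:ℝ)) * r :=
      mul_le_mul_of_nonneg_right hlow (le_of_lt hr0)
    have h4 : a * (n:ℝ) ≤ (A * r) * (n:ℝ) := by nlinarith
    exact le_of_mul_le_mul_right h4 hn0
  rw [Real.dist_eq, abs_lt]
  have haY' := abs_lt.mp haY
  have hbY' := abs_lt.mp hbY
  constructor
  · by_contra h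
    push_neg at h
    have hA' : A ≤ Y - ε := by linarith
    have h1 : A * r ≤ (Y - ε) * r := mul_le_mul_of_nonneg_right hA' (le_of_lt hr0)
    have h2 : ε ≤ ε * r := le_mul_of_one_le_right (le_of_lt hε) (le_of_lt hr1)
    have h3 : (r - 1) * Y ≤ ε / 4 := hrY
    linarith [hlb, haY'.1]
  · have h1 : b * r < (Y + ε / 8) * r := by
      exact mul_lt_mul_of_pos_right (by linarith [hbY'.2]) hr0
    have h2 : (ε / 8) * r ≤ (ε / 8) * 2 := by
      apply mul_le_mul_of_nonneg_left hr2 (by linarith)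
    linarith [hub, hrY]
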